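/- Let (W,S) be a finite Coxeter system with longest element w_0, and let w ↦ w* be an involutory automorphism of (W,S) (an automorphism of W preserving S with square the identity). Let Γ_* be the W-digraph associated to *, and let Γ_# be the W-digraph associated to the involutory automorphism w ↦ w^# = w_0 w* w_0. Then (Γ_*)_rev is isomorphic to Γ_# via the bijection sending the vertex m_x of Γ_* (for x a twisted involution with respect to *) to the vertex m_{x w_0} of Γ_#. -/

import Mathlib

open Finsupp

set_option synthInstance.maxHeartbeats 1000000
set_option maxHeartbeats 1000000

noncomputable section

/-- The field `ℚ(u)` of rational functions. -/
abbrev Kq : Type := RatFunc ℚ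

/-- The indeterminate `u`. -/
def uu : Kq := RatFunc.X

/-- An `S`-labeled digraph on vertex type `V` with labels in `B`:
`Edge a b s d` means there is an edge from `a` to `b` labeled `s`, which is
dashed if `d = true` and solid if `d = false`.  There are no loops, and every
vertex occurs in exactly one edge with any given label. -/
structure SLabeledDigraph (V B : Type*) where
  Edge : V → V → B → Bool → Prop
  no_loop : ∀ v s d, ¬ Edge v v s d
  unique_edge : ∀ v s, ∃! e : V × V × Bool,
    (e.1 = v ∨ e.2.1 = v) ∧ Edge e.1 e.2.1 s e.2.2

namespace SLabeledDigraph

variable {V B : Type*} (Γ : SLabeledDigraph V B)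

/-- Swap the endpoints of an edge datum. -/
def eswap {V : Type*} (e : V × V × Bool) : V × V × Bool := (e.2.1, e.1, e.2.2)

/-- The reversed digraph `Γ_rev`, with all edge directions reversed but types
and labels kept. -/
def rev : SLabeledDigraph V B where
  Edge a b s d := Γ.Edge b a s d
  no_loop v s d := Γ.no_loop v s d
  unique_edge v s := by
    obtain ⟨e, ⟨hinc, hedge⟩, huniq⟩ := Γ.unique_edge v s
    refine ⟨eswap e, ⟨Or.symm hinc, hedge⟩, ?_⟩
    rintro e' ⟨hinc', hedge'⟩
    have h1 : eswap e' = e := huniq (eswap e') ⟨Or.symm hinc', hedge'⟩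
    calc e' = eswap (eswap e') := rfl
    _ = eswap e := by rw [h1]

/-- The restriction `Γ_J`: same vertices, only edges with labels in `J`. -/
def restrict (J : Set B) : SLabeledDigraph V J where
  Edge a b s d := Γ.Edge a b s.1 d
  no_loop v s d := Γ.no_loop v s.1 d
  unique_edge v s := Γ.unique_edge v s.1

/-- Directed adjacency (ignoring labels and edge types). -/
def DAdj (a b : V) : Prop := ∃ s d, Γ.Edge a b s d

/-- Undirected adjacency. -/
def UAdj (a b : V) : Prop := Γ.DAdj a b ∨ Γ.DAdj b a

/-- `Γ` is connected if any two vertices are joined by an undirected path. -/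
def Connected : Prop := ∀ a b : V, Relation.ReflTransGen Γ.UAdj a b

/-- A source is a vertex at which no edge ends. -/
def IsSource (a : V) : Prop := ∀ b s d, ¬ Γ.Edge b a s d

/-- A sink is a vertex at which no edge begins. -/
def IsSink (a : V) : Prop := ∀ b s d, ¬ Γ.Edge a b s d

/-- `Γ` is acyclic if it has no nonempty directed circuit. -/
def Acyclic : Prop := ∀ a : V, ¬ Relation.TransGen Γ.DAdj a a

/-- The setoid whose classes are the connected components of `Γ`. -/
def compSetoid : Setoid V :=
  ⟨Relation.ReflTransGen Γ.UAdj,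
    ⟨fun _ => Relation.ReflTransGen.refl,
     fun h => haveI : Std.Symm Γ.UAdj := ⟨fun _ _ hab => Or.symm hab⟩; Std.Symm.symm _ _ h,
     fun h1 h2 => Relation.ReflTransGen.trans h1 h2⟩⟩

end SLabeledDigraph

/-- The Hecke algebra of a Coxeter system over `ℚ(u)`: an associative
`ℚ(u)`-algebra `H` with basis `{T_w : w ∈ W}` such that `T_1 = 1` and
`T_s T_w = T_{sw}` if `ℓ(sw) > ℓ(w)`, while
`T_s T_w = u² T_{sw} + (u² - 1) T_w` if `ℓ(sw) < ℓ(w)`. -/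
structure HeckeAlgebra {B W : Type*} [Group W] {M : CoxeterMatrix B}
    (cs : CoxeterSystem M W) (H : Type*) [Ring H] [Algebra Kq H] where
  T : W → H
  basis : Module.Basis W Kq H
  basis_eq : ∀ w, basis w = T w
  T_one : T 1 = 1
  T_mul_of_lt : ∀ (i : B) (w : W), cs.length w < cs.length (cs.simple i * w) →
    T (cs.simple i) * T w = T (cs.simple i * w)
  T_mul_of_gt : ∀ (i : B) (w : W), cs.length (cs.simple i * w) < cs.length w →
    T (cs.simple i) * T w = (uu ^ 2) • T (cs.simple i * w) + (uu ^ 2 - 1) • T w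

variable {B W : Type*} [Group W] {M : CoxeterMatrix B}
variable {H : Type*} [Ring H] [Algebra Kq H]

/-- `ρ` is the representation of `H` on `M(Γ)` (the `ℚ(u)`-vector space with
basis the vertices of `Γ`) in which each `T_s` acts by the operator `τ_s`
determined by the edges of `Γ`. -/
def WDigraphRep {V : Type*} (cs : CoxeterSystem M W) (ha : HeckeAlgebra cs H)
    (Γ : SLabeledDigraph V B)
    (ρ : H →ₐ[Kq] Module.End Kq (V →₀ Kq)) : Prop :=
  ∀ (a b : V) (i : B),
    (Γ.Edge a b i false →
      ρ (ha.T (cs.simple i)) (single a (1 : Kq)) = single b (1 : Kq) ∧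
      ρ (ha.T (cs.simple i)) (single b (1 : Kq))
        = (uu ^ 2 - 1) • single b (1 : Kq) + (uu ^ 2) • single a (1 : Kq)) ∧
    (Γ.Edge a b i true →
      ρ (ha.T (cs.simple i)) (single a (1 : Kq)) = uu • single a (1 : Kq) + (uu + 1) • single b (1 : Kq) ∧
      ρ (ha.T (cs.simple i)) (single b (1 : Kq))
        = (uu ^ 2 - uu - 1) • single b (1 : Kq) + (uu ^ 2 - uu) • single a (1 : Kq))

/-- `Γ` is a `W`-digraph: the assignment `T_s ↦ τ_s` extends to a
representation of `H` on `M(Γ)`. -/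
def IsWDigraph {V : Type*} (cs : CoxeterSystem M W) (ha : HeckeAlgebra cs H)
    (Γ : SLabeledDigraph V B) : Prop :=
  ∃ ρ : H →ₐ[Kq] Module.End Kq (V →₀ Kq), WDigraphRep cs ha Γ ρ


/-- `Γ` is the `W`-digraph `Γ_*` associated to the (involutory) automorphism
`σ` of `(W,S)`: its vertices are the twisted involutions
`{x : W // σ x = x⁻¹}`, with a solid edge `m_x → m_{s x σ(s)}` labeled `i`
when `s x ≠ x σ(s)` and `ℓ(s x) > ℓ(x)` (where `s = simple i`), and a dashed
edge `m_x → m_{s x}` labeled `i` when `s x = x σ(s)` and `ℓ(s x) > ℓ(x)`. -/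
def IsTwistedInvolutionDigraph (cs : CoxeterSystem M W) (σ : W →* W)
    (Γ : SLabeledDigraph {x : W // σ x = x⁻¹} B) : Prop :=
  ∀ (x y : {x : W // σ x = x⁻¹}) (i : B),
    (Γ.Edge x y i false ↔
      cs.simple i * x.1 ≠ x.1 * σ (cs.simple i) ∧
      cs.length x.1 < cs.length (cs.simple i * x.1) ∧
      y.1 = cs.simple i * x.1 * σ (cs.simple i)) ∧
    (Γ.Edge x y i true ↔
      cs.simple i * x.1 = x.1 * σ (cs.simple i) ∧
      cs.length x.1 < cs.length (cs.simple i * x.1) ∧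
      y.1 = cs.simple i * x.1)


/-!
The reflection cocycle `η : W → (W → ℤˣ)`, obtained by lifting `s ↦ (δ_s, s)` to the semidirect
product `(W → ℤˣ) ⋊ W`, gives the strong exchange condition: for a reflection `t`,
`ℓ(t w) < ℓ(w)` iff `η(w, t) = -1`. Since every reflection is a left inversion of `w₀`, the
identity `η(v w₀, s) = η(v, s) η(w₀, v⁻¹ s v)` shows that right multiplication by `w₀` exchanges
left ascents and left descents. Hence `w₀` is the unique longest element, an involution fixed by
every diagram automorphism, and `x ↦ x w₀` carries `*`-twisted involutions to `#`-twisted ones,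
with `s (x w₀) s^# = s x s* w₀`. So an edge `m_x → m_y` of `Γ_*`, an ascent from `x` to `y`,
becomes an ascent from `y w₀` to `x w₀`, i.e. an edge `m_{y w₀} → m_{x w₀}` of `Γ_#`. For solid
edges one also needs that if `s x ≠ x s*`, then `s` is a left descent of `x s*` iff it is one
of `x`.
-/

def conjSignAction (G : Type*) [Group G] : G →* MulAut (G → ℤˣ) :=
  mulAutArrow.comp ConjAct.toConjAct.toMonoidHom

section SignCocycle

variable {G : Type*} [Group G]

theorem conjSignAction_apply (g : G) (f : G → ℤˣ) (x : G) :
    conjSignAction G g f x = f (g⁻¹ * x * g) := by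
  show f ((ConjAct.toConjAct g)⁻¹ • x) = _
  rw [ConjAct.smul_def]
  simp

theorem inv_mul_mul_eq_iff_eq_mul_mul_inv {a x y : G} : a⁻¹ * x * a = y ↔ x = a * y * a⁻¹ := by
  constructor <;> intro h
  · rw [← h]; group
  · rw [h]; group

open scoped Classical in
def reflectionCocycleGen (t : G) : (G → ℤˣ) ⋊[conjSignAction G] G :=
  ⟨fun x => if x = t then -1 else 1, t⟩

theorem conj_pow_mul_pow_mul {s t : G} (hs : s * s = 1) (ht : t * t = 1) (r k : ℕ) :
    (s * t) ^ r * ((s * t) ^ k * s) * ((s * t) ^ r)⁻¹ = (s * t) ^ (2 * r + k) * s := by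
  have hs' : s⁻¹ = s := inv_eq_of_mul_eq_one_right hs
  have ht' : t⁻¹ = t := inv_eq_of_mul_eq_one_right ht
  have hinv : SemiconjBy s (s * t)⁻¹ (s * t) := by
    simp only [SemiconjBy, mul_inv_rev, hs', ht', ← mul_assoc]
  have hpow := (hinv.pow_right r).eq
  rw [inv_pow] at hpow
  rw [mul_assoc, mul_assoc, hpow, two_mul, pow_add, pow_add]
  group

open scoped Classical in
theorem reflectionCocycleGen_mul_pow_left {s t : G} (hs : s * s = 1) (ht : t * t = 1) (r : ℕ)
    (x : G) : ((reflectionCocycleGen s * reflectionCocycleGen t) ^ r).left x =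
      ∏ k ∈ Finset.range (2 * r), if x = (s * t) ^ k * s then -1 else 1 := by
  induction r with
  | zero => simp
  | succ r ih =>
    have hright : ((reflectionCocycleGen s * reflectionCocycleGen t) ^ r).right = (s * t) ^ r :=
      map_pow SemidirectProduct.rightHom _ r
    have hconj (k : ℕ) : ((s * t) ^ r)⁻¹ * x * (s * t) ^ r = (s * t) ^ k * s ↔
        x = (s * t) ^ (2 * r + k) * s := by
      rw [inv_mul_mul_eq_iff_eq_mul_mul_inv, conj_pow_mul_pow_mul hs ht]
    have hconj₀ := hconj 0
    rw [pow_zero, one_mul, add_zero] at hconj₀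
    have hconj_s (y : G) : s⁻¹ * y * s = t ↔ y = (s * t) ^ 1 * s := by
      rw [inv_mul_mul_eq_iff_eq_mul_mul_inv, inv_eq_of_mul_eq_one_right hs, pow_one]
    rw [pow_succ, SemidirectProduct.mul_left, Pi.mul_apply, ih, hright, conjSignAction_apply,
      SemidirectProduct.mul_left, Pi.mul_apply, conjSignAction_apply, Nat.mul_succ,
      Finset.prod_range_succ, Finset.prod_range_succ, mul_assoc (Finset.prod _ _)]
    simp only [reflectionCocycleGen]
    rw [if_congr (hconj_s _) rfl rfl, hconj 1, if_congr hconj₀ rfl rfl]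

theorem reflectionCocycleGen_mul_pow_eq_one {s t : G} (hs : s * s = 1) (ht : t * t = 1) {m : ℕ}
    (hm : (s * t) ^ m = 1) : (reflectionCocycleGen s * reflectionCocycleGen t) ^ m = 1 := by
  refine SemidirectProduct.ext (funext fun x => ?_)
    ((map_pow SemidirectProduct.rightHom _ m).trans hm)
  classical
  -- `(s t)^k s` occurs for `k` and for `k + m`, so the product is a square in `ℤˣ`.
  rw [reflectionCocycleGen_mul_pow_left hs ht, two_mul, Finset.prod_range_add]
  simp only [SemidirectProduct.one_left, Pi.one_apply, pow_add, hm, one_mul]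
  exact Int.units_mul_self _

end SignCocycle

theorem conj_map_mul_eq_inv_iff {G F : Type*} [Group G] [FunLike F G G] [MonoidHomClass F G G]
    {σ : F} {w₀ : G} (hw₀ : w₀ * w₀ = 1) (hσ : σ w₀ = w₀) (x : G) :
    w₀ * σ (x * w₀) * w₀ = (x * w₀)⁻¹ ↔ σ x = x⁻¹ := by
  rw [map_mul, hσ, mul_assoc, mul_assoc, hw₀, mul_one, mul_inv_rev,
    inv_eq_of_mul_eq_one_right hw₀, mul_right_inj]

namespace CoxeterSystem

section ReflectionCocycle

variable (cs : CoxeterSystem M W)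

theorem isLiftable_reflectionCocycleGen :
    M.IsLiftable fun i => reflectionCocycleGen (cs.simple i) := fun i j =>
  reflectionCocycleGen_mul_pow_eq_one (cs.simple_mul_simple_self i)
    (cs.simple_mul_simple_self j) (cs.simple_mul_simple_pow i j)

def reflectionCocycleHom : W →* (W → ℤˣ) ⋊[conjSignAction W] W :=
  cs.lift ⟨_, cs.isLiftable_reflectionCocycleGen⟩

/-- `η(w, t)`; on a word for `w` it is `-1` to the number of occurrences of `t` in the left
inversion sequence. -/
def reflectionCocycle (w t : W) : ℤˣ := (cs.reflectionCocycleHom w).left t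

theorem reflectionCocycleHom_right (w : W) : (cs.reflectionCocycleHom w).right = w := by
  have h : SemidirectProduct.rightHom.comp cs.reflectionCocycleHom = MonoidHom.id W :=
    cs.ext_simple fun i => by simp [reflectionCocycleHom, reflectionCocycleGen]
  exact DFunLike.congr_fun h w

theorem reflectionCocycle_mul (u v t : W) :
    cs.reflectionCocycle (u * v) t =
      cs.reflectionCocycle u t * cs.reflectionCocycle v (u⁻¹ * t * u) := by
  simp only [reflectionCocycle, map_mul, SemidirectProduct.mul_left, Pi.mul_apply,
    conjSignAction_apply, reflectionCocycleHom_right]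

theorem reflectionCocycle_one (t : W) : cs.reflectionCocycle 1 t = 1 := by
  simp [reflectionCocycle]

open scoped Classical in
theorem reflectionCocycle_simple (i : B) (t : W) :
    cs.reflectionCocycle (cs.simple i) t = if t = cs.simple i then -1 else 1 := by
  simp [reflectionCocycle, reflectionCocycleHom, reflectionCocycleGen]

theorem reflectionCocycle_inv (u t : W) :
    cs.reflectionCocycle u⁻¹ t = cs.reflectionCocycle u (u * t * u⁻¹) := by
  have h := cs.reflectionCocycle_mul u u⁻¹ (u * t * u⁻¹)
  rw [mul_inv_cancel, reflectionCocycle_one, show u⁻¹ * (u * t * u⁻¹) * u = t by group] at h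
  rw [eq_inv_of_mul_eq_one_right h.symm, Int.units_inv_eq_self]

theorem reflectionCocycle_self_of_isReflection {t : W} (ht : cs.IsReflection t) :
    cs.reflectionCocycle t t = -1 := by
  obtain ⟨u, i, rfl⟩ := ht
  have h₁ : u⁻¹ * (u * cs.simple i * u⁻¹) * u = cs.simple i := by group
  have h₂ : (u * cs.simple i)⁻¹ * (u * cs.simple i * u⁻¹) * (u * cs.simple i) = cs.simple i := by
    rw [mul_inv_rev, cs.inv_simple]
    simp [mul_assoc]
  rw [reflectionCocycle_mul, reflectionCocycle_mul, reflectionCocycle_inv, h₁, h₂,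
    reflectionCocycle_simple, if_pos rfl, mul_neg_one, neg_mul, Int.units_mul_self]

theorem length_mul_lt_of_reflectionCocycle_eq_neg_one {w t : W}
    (h : cs.reflectionCocycle w t = -1) : cs.length (t * w) < cs.length w := by
  induction hn : cs.length w using Nat.strong_induction_on generalizing w t with
  | _ n ih =>
  subst hn
  obtain rfl | hw := eq_or_ne w 1
  · exact absurd h (by rw [reflectionCocycle_one]; decide)
  obtain ⟨i, hi⟩ := cs.exists_leftDescent_of_ne_one hw
  have hlen := cs.isLeftDescent_iff.mp hi
  rw [← cs.simple_mul_simple_cancel_left (w := w) i, reflectionCocycle_mul,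
    reflectionCocycle_simple, cs.inv_simple] at h
  by_cases hti : t = cs.simple i
  · rw [hti]
    exact hi
  rw [if_neg hti, one_mul] at h
  have hlt := ih _ hi h rfl
  calc cs.length (t * w)
      = cs.length (cs.simple i * (cs.simple i * t * cs.simple i * (cs.simple i * w))) := by
        simp only [mul_assoc, cs.simple_mul_simple_cancel_left]
  _ ≤ cs.length (cs.simple i * t * cs.simple i * (cs.simple i * w)) + 1 := by
        simpa [cs.length_simple, add_comm] using cs.length_mul_le (cs.simple i) _
  _ < cs.length w := by omega

theorem reflectionCocycle_eq_neg_one_iff {w t : W} (ht : cs.IsReflection t) :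
    cs.reflectionCocycle w t = -1 ↔ cs.length (t * w) < cs.length w := by
  refine ⟨cs.length_mul_lt_of_reflectionCocycle_eq_neg_one, fun hlt => ?_⟩
  have hw : w = t * (t * w) := by rw [← mul_assoc, ht.mul_self, one_mul]
  have hη : cs.reflectionCocycle (t * w) t = 1 := by
    refine (Int.units_eq_one_or _).resolve_right fun h => ?_
    have := cs.length_mul_lt_of_reflectionCocycle_eq_neg_one h
    rw [← hw] at this
    omega
  rw [hw, reflectionCocycle_mul, reflectionCocycle_self_of_isReflection cs ht, inv_mul_cancel,
    one_mul, hη, mul_one]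

theorem isLeftDescent_iff_reflectionCocycle {w : W} {i : B} :
    cs.IsLeftDescent w i ↔ cs.reflectionCocycle w (cs.simple i) = -1 :=
  (cs.reflectionCocycle_eq_neg_one_iff (cs.isReflection_simple i)).symm

end ReflectionCocycle

variable {cs : CoxeterSystem M W}

theorem isLeftDescent_mul_simple_iff {x : W} {i j : B} (h : cs.simple i * x ≠ x * cs.simple j) :
    cs.IsLeftDescent (x * cs.simple j) i ↔ cs.IsLeftDescent x i := by
  have hne : x⁻¹ * cs.simple i * x ≠ cs.simple j := fun h' => h (by rw [← h']; group)
  rw [isLeftDescent_iff_reflectionCocycle, isLeftDescent_iff_reflectionCocycle,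
    reflectionCocycle_mul, reflectionCocycle_simple, if_neg hne, mul_one]

theorem eq_one_of_forall_not_isLeftDescent {w : W} (h : ∀ i, ¬ cs.IsLeftDescent w i) : w = 1 := by
  by_contra hw
  obtain ⟨i, hi⟩ := cs.exists_leftDescent_of_ne_one hw
  exact h i hi

theorem lt_length_simple_mul_iff {w : W} {i : B} :
    cs.length w < cs.length (cs.simple i * w) ↔ ¬ cs.IsLeftDescent w i := by
  rw [not_isLeftDescent_iff]
  have := cs.length_simple_mul w i
  omega

theorem lt_length_simple_mul_iff_isLeftDescent_simple_mul {y : W} {i : B} :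
    cs.length y < cs.length (cs.simple i * y) ↔ cs.IsLeftDescent (cs.simple i * y) i := by
  rw [lt_length_simple_mul_iff,
    cs.isLeftDescent_iff_not_isLeftDescent_mul (w := cs.simple i * y),
    cs.simple_mul_simple_cancel_left]

section Longest

variable {w₀ : W} (hw₀ : ∀ w, cs.length w ≤ cs.length w₀)
include hw₀

theorem reflectionCocycle_eq_neg_one_of_forall_length_le {t : W} (ht : cs.IsReflection t) :
    cs.reflectionCocycle w₀ t = -1 :=
  (cs.reflectionCocycle_eq_neg_one_iff ht).mpr <|
    lt_of_le_of_ne (hw₀ _) (ht.length_mul_right_ne w₀)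

theorem isLeftDescent_of_forall_length_le (i : B) : cs.IsLeftDescent w₀ i :=
  (cs.isLeftDescent_iff_reflectionCocycle).mpr
    (reflectionCocycle_eq_neg_one_of_forall_length_le hw₀ (cs.isReflection_simple i))

theorem isLeftDescent_mul_iff_of_forall_length_le (v : W) (i : B) :
    cs.IsLeftDescent (v * w₀) i ↔ ¬ cs.IsLeftDescent v i := by
  have ht : cs.IsReflection (v⁻¹ * cs.simple i * v) := by
    simpa using (cs.isReflection_simple i).conj v⁻¹
  rw [isLeftDescent_iff_reflectionCocycle, isLeftDescent_iff_reflectionCocycle,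
    reflectionCocycle_mul, reflectionCocycle_eq_neg_one_of_forall_length_le hw₀ ht]
  rcases Int.units_eq_one_or (cs.reflectionCocycle v (cs.simple i)) with h | h <;> simp [h]

theorem mul_eq_one_of_forall_length_le {w₁ : W} (hw₁ : ∀ w, cs.length w ≤ cs.length w₁) :
    w₁ * w₀ = 1 :=
  eq_one_of_forall_not_isLeftDescent fun i => by
    rw [isLeftDescent_mul_iff_of_forall_length_le hw₀, not_not]
    exact isLeftDescent_of_forall_length_le hw₁ i

theorem mul_self_eq_one_of_forall_length_le : w₀ * w₀ = 1 :=
  mul_eq_one_of_forall_length_le hw₀ hw₀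

theorem eq_of_forall_length_le {w₁ : W} (hw₁ : ∀ w, cs.length w ≤ cs.length w₁) : w₁ = w₀ :=
  mul_right_cancel ((mul_eq_one_of_forall_length_le hw₀ hw₁).trans
    (mul_self_eq_one_of_forall_length_le hw₀).symm)

theorem lt_length_simple_mul_mul_iff_of_forall_length_le (x : W) (i : B) :
    cs.length (x * w₀) < cs.length (cs.simple i * (x * w₀)) ↔ cs.IsLeftDescent x i := by
  rw [lt_length_simple_mul_iff, isLeftDescent_mul_iff_of_forall_length_le hw₀, not_not]

end Longest

theorem length_map_le {F : Type*} [FunLike F W W] [MonoidHomClass F W W] {σ : F}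
    (hσS : ∀ i, ∃ j, σ (cs.simple i) = cs.simple j) (w : W) :
    cs.length (σ w) ≤ cs.length w := by
  choose f hf using hσS
  obtain ⟨ω, hω, rfl⟩ := cs.exists_isReduced w
  have hσω : σ (cs.wordProd ω) = cs.wordProd (ω.map f) := by
    simp only [wordProd, map_list_prod, List.map_map, Function.comp_def, hf]
  calc cs.length (σ (cs.wordProd ω)) ≤ (ω.map f).length := hσω ▸ cs.length_wordProd_le _
  _ = cs.length (cs.wordProd ω) := by rw [List.length_map, hω]

theorem map_eq_of_forall_length_le {F : Type*} [FunLike F W W] [MonoidHomClass F W W] {σ : F}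
    (hσS : ∀ i, ∃ j, σ (cs.simple i) = cs.simple j) (hσ2 : ∀ w, σ (σ w) = w) {w₀ : W}
    (hw₀ : ∀ w, cs.length w ≤ cs.length w₀) : σ w₀ = w₀ :=
  eq_of_forall_length_le hw₀ fun w =>
    calc cs.length w ≤ cs.length w₀ := hw₀ w
    _ = cs.length (σ (σ w₀)) := by rw [hσ2]
    _ ≤ cs.length (σ w₀) := length_map_le hσS _

section TwistedEdges

variable (cs) in
/-- The condition for a solid edge `m_x → m_y` labeled `i` in the `W`-digraph of an automorphism
sending `s_i` to `t`; `TwistedDashedEdge` is its dashed counterpart. -/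
def TwistedSolidEdge (i : B) (t x y : W) : Prop :=
  cs.simple i * x ≠ x * t ∧ cs.length x < cs.length (cs.simple i * x) ∧
    y = cs.simple i * x * t

variable (cs) in
def TwistedDashedEdge (i : B) (t x y : W) : Prop :=
  cs.simple i * x = x * t ∧ cs.length x < cs.length (cs.simple i * x) ∧ y = cs.simple i * x

theorem twistedSolidEdge_simple_iff {i j : B} {x y : W} :
    cs.TwistedSolidEdge i (cs.simple j) y x ↔
      cs.simple i * x ≠ x * cs.simple j ∧ cs.IsLeftDescent x i ∧
        y = cs.simple i * x * cs.simple j := by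
  have hl (z : W) : cs.simple i * (cs.simple i * z * cs.simple j) = z * cs.simple j := by
    rw [← mul_assoc, ← mul_assoc, cs.simple_mul_simple_self, one_mul]
  have hr (z : W) : cs.simple i * z * cs.simple j * cs.simple j = cs.simple i * z :=
    cs.simple_mul_simple_cancel_right j
  constructor
  · rintro ⟨hne, hlt, rfl⟩
    have hne' : cs.simple i * (cs.simple i * y) ≠ cs.simple i * y * cs.simple j := by
      rw [cs.simple_mul_simple_cancel_left]
      exact fun h => hne (by rw [← hl y, ← h])
    refine ⟨by rw [hl, hr]; exact hne.symm, ?_, by rw [hl, cs.simple_mul_simple_cancel_right]⟩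
    exact (isLeftDescent_mul_simple_iff hne').mpr
      (lt_length_simple_mul_iff_isLeftDescent_simple_mul.mp hlt)
  · rintro ⟨hne, hdesc, rfl⟩
    refine ⟨by rw [hl, hr]; exact hne.symm, ?_, by rw [hl, cs.simple_mul_simple_cancel_right]⟩
    rw [hl]
    have := (isLeftDescent_mul_simple_iff hne).mpr hdesc
    rwa [IsLeftDescent, ← mul_assoc] at this

theorem twistedDashedEdge_simple_iff {i j : B} {x y : W} :
    cs.TwistedDashedEdge i (cs.simple j) y x ↔
      cs.simple i * x = x * cs.simple j ∧ cs.IsLeftDescent x i ∧ y = cs.simple i * x := by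
  constructor
  · rintro ⟨heq, hlt, rfl⟩
    refine ⟨?_, lt_length_simple_mul_iff_isLeftDescent_simple_mul.mp hlt,
      (cs.simple_mul_simple_cancel_left i).symm⟩
    rw [cs.simple_mul_simple_cancel_left, heq, cs.simple_mul_simple_cancel_right]
  · rintro ⟨heq, hdesc, rfl⟩
    refine ⟨?_, ?_, (cs.simple_mul_simple_cancel_left i).symm⟩
    · rw [cs.simple_mul_simple_cancel_left, heq, cs.simple_mul_simple_cancel_right]
    · rwa [lt_length_simple_mul_iff_isLeftDescent_simple_mul, cs.simple_mul_simple_cancel_left]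

variable {w₀ : W} (hw₀ : ∀ w, cs.length w ≤ cs.length w₀)
include hw₀

theorem mul_mul_conj_of_forall_length_le (z t : W) : z * w₀ * (w₀ * t * w₀) = z * t * w₀ := by
  rw [← mul_assoc, ← mul_assoc, mul_assoc z, mul_self_eq_one_of_forall_length_le hw₀, mul_one]

theorem twistedSolidEdge_mul_iff_of_forall_length_le {i j : B} {x y : W} :
    cs.TwistedSolidEdge i (w₀ * cs.simple j * w₀) (x * w₀) (y * w₀) ↔
      cs.TwistedSolidEdge i (cs.simple j) y x := by
  rw [twistedSolidEdge_simple_iff, TwistedSolidEdge,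
    lt_length_simple_mul_mul_iff_of_forall_length_le hw₀, ← mul_assoc (cs.simple i) x w₀,
    mul_mul_conj_of_forall_length_le hw₀, mul_mul_conj_of_forall_length_le hw₀, ne_eq,
    mul_left_inj, mul_left_inj, ne_eq]

theorem twistedDashedEdge_mul_iff_of_forall_length_le {i j : B} {x y : W} :
    cs.TwistedDashedEdge i (w₀ * cs.simple j * w₀) (x * w₀) (y * w₀) ↔
      cs.TwistedDashedEdge i (cs.simple j) y x := by
  rw [twistedDashedEdge_simple_iff, TwistedDashedEdge,
    lt_length_simple_mul_mul_iff_of_forall_length_le hw₀, ← mul_assoc (cs.simple i) x w₀,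
    mul_mul_conj_of_forall_length_le hw₀, mul_left_inj, mul_left_inj]

end TwistedEdges

end CoxeterSystem

namespace IsTwistedInvolutionDigraph

variable {cs : CoxeterSystem M W} {σ : W →* W} {Γ : SLabeledDigraph {x : W // σ x = x⁻¹} B}

theorem edge_false_iff (h : IsTwistedInvolutionDigraph cs σ Γ) (x y : {x : W // σ x = x⁻¹})
    (i : B) : Γ.Edge x y i false ↔ cs.TwistedSolidEdge i (σ (cs.simple i)) x.1 y.1 :=
  (h x y i).1

theorem edge_true_iff (h : IsTwistedInvolutionDigraph cs σ Γ) (x y : {x : W // σ x = x⁻¹})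
    (i : B) : Γ.Edge x y i true ↔ cs.TwistedDashedEdge i (σ (cs.simple i)) x.1 y.1 :=
  (h x y i).2

end IsTwistedInvolutionDigraph

theorem twisted_digraph_rev_iso_general
    (cs : CoxeterSystem M W)
    (w₀ : W) (hw₀ : ∀ w : W, cs.length w ≤ cs.length w₀)
    (σ : W ≃* W) (hσ2 : ∀ w, σ (σ w) = w)
    (hσS : ∀ i : B, ∃ j : B, σ (cs.simple i) = cs.simple j)
    (σs : W ≃* W) (hσs : ∀ w, σs w = w₀ * σ w * w₀)
    (Γstar : SLabeledDigraph {x : W // σ x = x⁻¹} B)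
    (hΓstar : IsTwistedInvolutionDigraph cs σ Γstar)
    (Γsharp : SLabeledDigraph {x : W // σs x = x⁻¹} B)
    (hΓsharp : IsTwistedInvolutionDigraph cs σs Γsharp) :
    ∃ φ : {x : W // σ x = x⁻¹} ≃ {x : W // σs x = x⁻¹},
      (∀ x, (φ x).1 = x.1 * w₀) ∧
      ∀ (a b : {x : W // σ x = x⁻¹}) (i : B) (d : Bool),
        Γstar.rev.Edge a b i d ↔ Γsharp.Edge (φ a) (φ b) i d := by
  have hw₀w₀ : w₀ * w₀ = 1 := CoxeterSystem.mul_self_eq_one_of_forall_length_le hw₀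
  have hσw₀ : σ w₀ = w₀ := CoxeterSystem.map_eq_of_forall_length_le hσS hσ2 hw₀
  refine ⟨(Equiv.mulRight w₀).subtypeEquiv fun x => ?_, fun x => rfl, fun a b i d => ?_⟩
  · rw [Equiv.coe_mulRight, hσs]
    exact (conj_map_mul_eq_inv_iff hw₀w₀ hσw₀ x).symm
  obtain ⟨j, hj⟩ := hσS i
  have hσs_simple : σs (cs.simple i) = w₀ * cs.simple j * w₀ := by rw [hσs, hj]
  cases d
  · refine (hΓstar.edge_false_iff b a i).trans
      (Iff.trans ?_ (hΓsharp.edge_false_iff _ _ i).symm)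
    show cs.TwistedSolidEdge i (σ (cs.simple i)) b.1 a.1 ↔
      cs.TwistedSolidEdge i (σs (cs.simple i)) (a.1 * w₀) (b.1 * w₀)
    rw [hσs_simple, CoxeterSystem.twistedSolidEdge_mul_iff_of_forall_length_le hw₀, hj]
  · refine (hΓstar.edge_true_iff b a i).trans
      (Iff.trans ?_ (hΓsharp.edge_true_iff _ _ i).symm)
    show cs.TwistedDashedEdge i (σ (cs.simple i)) b.1 a.1 ↔
      cs.TwistedDashedEdge i (σs (cs.simple i)) (a.1 * w₀) (b.1 * w₀)
    rw [hσs_simple, CoxeterSystem.twistedDashedEdge_mul_iff_of_forall_length_le hw₀, hj]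

/-- Let `(W,S)` be finite with longest element `w₀`, let
`*` be an involutory automorphism of `(W,S)`, and let `#` be the involutory
automorphism `w ↦ w₀ w* w₀`.  Then `(Γ_*)_rev` is isomorphic to `Γ_#` via
`m_x ↦ m_{x w₀}`. -/
theorem twisted_digraph_rev_iso [Finite W]
    (cs : CoxeterSystem M W)
    (w₀ : W) (hw₀ : ∀ w : W, cs.length w ≤ cs.length w₀)
    (σ : W ≃* W) (hσ2 : ∀ w, σ (σ w) = w)
    (hσS : ∀ i : B, ∃ j : B, σ (cs.simple i) = cs.simple j)
    (σs : W ≃* W) (hσs : ∀ w, σs w = w₀ * σ w * w₀)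
    (Γstar : SLabeledDigraph {x : W // σ x = x⁻¹} B)
    (hΓstar : IsTwistedInvolutionDigraph cs σ Γstar)
    (Γsharp : SLabeledDigraph {x : W // σs x = x⁻¹} B)
    (hΓsharp : IsTwistedInvolutionDigraph cs σs Γsharp) :
    ∃ φ : {x : W // σ x = x⁻¹} ≃ {x : W // σs x = x⁻¹},
      (∀ x, (φ x).1 = x.1 * w₀) ∧
      ∀ (a b : {x : W // σ x = x⁻¹}) (i : B) (d : Bool),
        Γstar.rev.Edge a b i d ↔ Γsharp.Edge (φ a) (φ b) i d :=
  twisted_digraph_rev_iso_general cs w₀ hw₀ σ hσ2 hσS σs hσs Γstar hΓstar Γsharp hΓsharp
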